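/- arXiv:1104.2095 — 2 statements merged into one kernel-verified Lean document; each statement's English description precedes it below -/
import Mathlib

section
/- Let H be a complex Hilbert space and T a densely defined self-adjoint operator on H. Then: (i) the map x ↦ T x + i·x is a bijection from the domain of T onto H; (ii) there is a linear isometric bijection (unitary) U : H → H, the Cayley transform of T, satisfying U(T x + i·x) = T x − i·x for every x in the domain of T; (iii) U − id is injective, i.e. 1 is not an eigenvalue of U. -/
open scoped ComplexConjugate

local notation "⟪" x ", " y "⟫" => @inner ℂ _ _ x y

section CayleyAux

set_option linter.unusedSectionVars false


variable {H : Type*} [NormedAddCommGroup H] [InnerProductSpace ℂ H] [CompleteSpace H]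

noncomputable def cayleyAuxMap (T : H →ₗ.[ℂ] H) (c : ℂ) : T.domain →ₗ[ℂ] H :=
  T.toFun + c • T.domain.subtype

lemma cayleyAuxMap_apply (T : H →ₗ.[ℂ] H) (c : ℂ) (x : T.domain) :
    cayleyAuxMap T c x = T x + c • (x : H) := rfl

section
variable (T : H →ₗ.[ℂ] H)
  (hdense : Dense (T.domain : Set H)) (hsa : T.adjoint = T)
  (hsymm : ∀ x y : T.domain, ⟪T x, (y : H)⟫ = ⟪(x : H), T y⟫)
  (c : ℂ) (hre : c.re = 0) (hcn : ‖c‖ = 1)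

include hdense hsa in
lemma cayley_closed (x z : H) (h : ∀ v : T.domain, ⟪z, (v : H)⟫ = ⟪x, T v⟫) :
    ∃ hx : x ∈ T.domain, T ⟨x, hx⟩ = z := by
  have hx' : x ∈ T.adjoint.domain :=
    LinearPMap.mem_adjoint_domain_of_exists x ⟨z, fun v => h v⟩
  have hz : T.adjoint ⟨x, hx'⟩ = z :=
    LinearPMap.adjoint_apply_eq hdense ⟨x, hx'⟩ fun v => h v
  have hle : T.adjoint ≤ T := le_of_eq hsa
  refine ⟨hle.1 hx', ?_⟩
  rw [← hle.2 (x := ⟨x, hx'⟩) (y := ⟨x, hle.1 hx'⟩) rfl]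
  exact hz

include hsymm hre hcn in
lemma cayley_norm_sq (x : T.domain) :
    ‖cayleyAuxMap T c x‖ ^ 2 = ‖T x‖ ^ 2 + ‖(x : H)‖ ^ 2 := by
  have him : (⟪T x, (x : H)⟫).im = 0 := by
    have h1 : (starRingEnd ℂ) ⟪T x, (x : H)⟫ = ⟪T x, (x : H)⟫ := by
      rw [inner_conj_symm]; exact (hsymm x x).symm
    exact Complex.conj_eq_iff_im.mp h1
  have hcross : (Complex.re ⟪T x, c • (x : H)⟫ : ℝ) = 0 := by
    rw [inner_smul_right, Complex.mul_re, hre, him]; ring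
  have hns : ‖c • (x : H)‖ = ‖(x : H)‖ := by rw [norm_smul, hcn, one_mul]
  rw [cayleyAuxMap_apply, @norm_add_sq ℂ]
  simp only [RCLike.re_to_complex]
  rw [hcross, hns]; ring

include hsymm hre hcn in
lemma cayley_norm_le (x : T.domain) :
    ‖(x : H)‖ ≤ ‖cayleyAuxMap T c x‖ ∧ ‖T x‖ ≤ ‖cayleyAuxMap T c x‖ := by
  have h := cayley_norm_sq T hsymm c hre hcn x
  constructor
  · have h2 : ‖(x : H)‖ ^ 2 ≤ ‖cayleyAuxMap T c x‖ ^ 2 := by nlinarith [sq_nonneg ‖T x‖]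
    exact (pow_le_pow_iff_left₀ (norm_nonneg _) (norm_nonneg _) two_ne_zero).mp h2
  · have h2 : ‖T x‖ ^ 2 ≤ ‖cayleyAuxMap T c x‖ ^ 2 := by nlinarith [sq_nonneg ‖(x : H)‖]
    exact (pow_le_pow_iff_left₀ (norm_nonneg _) (norm_nonneg _) two_ne_zero).mp h2

include hdense hsa hsymm hre hcn in
lemma cayley_range_closed :
    IsClosed ((LinearMap.range (cayleyAuxMap T c) : Submodule ℂ H) : Set H) := by
  apply IsSeqClosed.isClosed
  intro u p hu hup
  choose x hx using hu
  have hcu : CauchySeq u := hup.cauchySeq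
  have hsub : ∀ n m : ℕ, cayleyAuxMap T c (x n - x m) = u n - u m := by
    intro n m; rw [map_sub, hx, hx]
  have hb1 : ∀ n m : ℕ, ‖(x n : H) - (x m : H)‖ ≤ ‖u n - u m‖ := by
    intro n m
    have := (cayley_norm_le T hsymm c hre hcn (x n - x m)).1
    rwa [hsub, Submodule.coe_sub] at this
  have hb2 : ∀ n m : ℕ, ‖T (x n) - T (x m)‖ ≤ ‖u n - u m‖ := by
    intro n m
    have := (cayley_norm_le T hsymm c hre hcn (x n - x m)).2
    rwa [hsub, T.map_sub] at this
  have hcx : CauchySeq (fun n => (x n : H)) := by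
    rw [Metric.cauchySeq_iff] at hcu ⊢
    intro ε hε
    obtain ⟨N, hN⟩ := hcu ε hε
    refine ⟨N, fun n hn m hm => ?_⟩
    calc dist (x n : H) (x m : H) = ‖(x n : H) - (x m : H)‖ := dist_eq_norm _ _
    _ ≤ ‖u n - u m‖ := hb1 n m
    _ = dist (u n) (u m) := (dist_eq_norm _ _).symm
    _ < ε := hN n hn m hm
  have hcz : CauchySeq (fun n => T (x n)) := by
    rw [Metric.cauchySeq_iff] at hcu ⊢
    intro ε hε
    obtain ⟨N, hN⟩ := hcu ε hε
    refine ⟨N, fun n hn m hm => ?_⟩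
    calc dist (T (x n)) (T (x m)) = ‖T (x n) - T (x m)‖ := dist_eq_norm _ _
    _ ≤ ‖u n - u m‖ := hb2 n m
    _ = dist (u n) (u m) := (dist_eq_norm _ _).symm
    _ < ε := hN n hn m hm
  obtain ⟨xl, hxl⟩ := cauchySeq_tendsto_of_complete hcx
  obtain ⟨zl, hzl⟩ := cauchySeq_tendsto_of_complete hcz
  have hmem : ∃ hx : xl ∈ T.domain, T ⟨xl, hx⟩ = zl := by
    apply cayley_closed T hdense hsa
    intro v
    have h1 : Filter.Tendsto (fun n => ⟪T (x n), (v : H)⟫) Filter.atTop (nhds ⟪zl, (v : H)⟫) :=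
      hzl.inner tendsto_const_nhds
    have h2 : Filter.Tendsto (fun n => ⟪(x n : H), T v⟫) Filter.atTop (nhds ⟪xl, T v⟫) :=
      hxl.inner tendsto_const_nhds
    have h3 : (fun n => ⟪T (x n), (v : H)⟫) = fun n => ⟪(x n : H), T v⟫ := by
      funext n; exact hsymm (x n) v
    rw [h3] at h1
    exact tendsto_nhds_unique h1 h2
  obtain ⟨hxm, hTx⟩ := hmem
  have hlim : Filter.Tendsto u Filter.atTop (nhds (zl + c • xl)) := by
    have : Filter.Tendsto (fun n => T (x n) + c • (x n : H)) Filter.atTop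
        (nhds (zl + c • xl)) := hzl.add ((hxl.const_smul c))
    convert this using 1
    funext n; rw [← hx n, cayleyAuxMap_apply]
  have hp : p = zl + c • xl := tendsto_nhds_unique hup hlim
  refine ⟨⟨xl, hxm⟩, ?_⟩
  rw [cayleyAuxMap_apply, hTx, hp]

include hdense hsa hsymm hre in
lemma cayley_orth (hc0 : c ≠ 0) (y : H)
    (hy : ∀ x : T.domain, ⟪T x + c • (x : H), y⟫ = 0) : y = 0 := by
  have hconj : (starRingEnd ℂ) c = -c := by
    apply Complex.ext <;> simp [hre]
  have h : ∀ x : T.domain, ⟪(-(starRingEnd ℂ) c) • y, (x : H)⟫ = ⟪y, T x⟫ := by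
    intro x
    have h1 := hy x
    rw [inner_add_left, inner_smul_left] at h1
    have h2 : ⟪T x, y⟫ = -((starRingEnd ℂ) c * ⟪(x : H), y⟫) := by linear_combination h1
    rw [inner_smul_left, ← inner_conj_symm y (T x), h2]
    rw [← inner_conj_symm (x : H) y]
    simp [mul_comm]
  obtain ⟨hym, hTy⟩ := cayley_closed T hdense hsa y (-(starRingEnd ℂ) c • y) h
  have hs := hsymm ⟨y, hym⟩ ⟨y, hym⟩
  rw [hTy] at hs
  rw [inner_smul_left, inner_smul_right] at hs
  have : (2 * c) * ⟪y, y⟫ = 0 := by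
    simp only [Submodule.coe_mk, map_neg, Complex.conj_conj, hconj, neg_neg] at hs
    linear_combination -hs
  have h0 : ⟪y, y⟫ = 0 := by
    rcases mul_eq_zero.mp this with h | h
    · exact absurd h (by simp [hc0])
    · exact h
  exact inner_self_eq_zero.mp h0
end

section
variable (T : H →ₗ.[ℂ] H)
  (hdense : Dense (T.domain : Set H)) (hsa : T.adjoint = T)
  (hsymm : ∀ x y : T.domain, ⟪T x, (y : H)⟫ = ⟪(x : H), T y⟫)
  (c : ℂ) (hre : c.re = 0) (hcn : ‖c‖ = 1)

include hdense hsa hsymm hre hcn in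
lemma cayley_bijective (hc0 : c ≠ 0) : Function.Bijective (cayleyAuxMap T c) := by
  constructor
  · intro a b hab
    have h : cayleyAuxMap T c (a - b) = 0 := by rw [map_sub, hab, sub_self]
    have h2 := (cayley_norm_le T hsymm c hre hcn (a - b)).1
    rw [h, norm_zero] at h2
    have hz : ‖((a - b : T.domain) : H)‖ = 0 := le_antisymm h2 (norm_nonneg _)
    have : (a - b : T.domain) = 0 := by
      rwa [norm_eq_zero, ZeroMemClass.coe_eq_zero] at hz
    exact sub_eq_zero.mp this
  · have hK := cayley_range_closed T hdense hsa hsymm c hre hcn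
    haveI : CompleteSpace (LinearMap.range (cayleyAuxMap T c)) := hK.completeSpace_coe
    have horth : (LinearMap.range (cayleyAuxMap T c))ᗮ = ⊥ := by
      rw [Submodule.eq_bot_iff]
      intro y hy
      apply cayley_orth T hdense hsa hsymm c hre hc0 y
      intro x
      have := (Submodule.mem_orthogonal _ y).mp hy (cayleyAuxMap T c x) ⟨x, rfl⟩
      rwa [cayleyAuxMap_apply] at this
    have htop : LinearMap.range (cayleyAuxMap T c) = ⊤ :=
      Submodule.orthogonal_eq_bot_iff.mp horth
    exact LinearMap.range_eq_top.mp htop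
end


end CayleyAux

set_option maxHeartbeats 1000000 in
/-- **Cayley transform of a self-adjoint operator.**
If `T` is a densely defined self-adjoint operator on a complex Hilbert space `H`, then
(i) `x ↦ T x + i x` is a bijection from the domain of `T` onto `H`;
(ii) there is a unitary `U : H → H` with `U (T x + i x) = T x - i x` for all `x` in the domain;
(iii) `U - id` is injective, i.e. `1` is not an eigenvalue of `U`. -/
theorem cayley_transform_of_selfAdjoint
    {H : Type*} [NormedAddCommGroup H] [InnerProductSpace ℂ H] [CompleteSpace H]
    (T : H →ₗ.[ℂ] H) (hdense : Dense (T.domain : Set H))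
    (hsa : T.adjoint = T) :
    Function.Bijective (fun x : T.domain => T x + Complex.I • (x : H)) ∧
    ∃ U : H ≃ₗᵢ[ℂ] H,
      (∀ x : T.domain, U (T x + Complex.I • (x : H)) = T x - Complex.I • (x : H)) ∧
      (∀ y : H, U y = y → y = 0) := by
  have hsymm : ∀ x y : T.domain, ⟪T x, (y : H)⟫ = ⟪(x : H), T y⟫ := by
    have h := LinearPMap.adjoint_isFormalAdjoint hdense (T := T)
    rw [hsa] at h
    exact fun x y => h x y
  have hbij₁ : Function.Bijective (cayleyAuxMap T Complex.I) :=
    cayley_bijective T hdense hsa hsymm Complex.I Complex.I_re Complex.norm_I Complex.I_ne_zero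
  have hbij₂ : Function.Bijective (cayleyAuxMap T (-Complex.I)) :=
    cayley_bijective T hdense hsa hsymm (-Complex.I) (by simp) (by simp) (by simp)
  have hfun : (fun x : T.domain => T x + Complex.I • (x : H)) = ⇑(cayleyAuxMap T Complex.I) :=
    funext fun x => (cayleyAuxMap_apply T Complex.I x).symm
  constructor
  · rw [hfun]; exact hbij₁
  · set e₁ := LinearEquiv.ofBijective (cayleyAuxMap T Complex.I) hbij₁ with he₁
    set e₂ := LinearEquiv.ofBijective (cayleyAuxMap T (-Complex.I)) hbij₂ with he₂
    set U : H ≃ₗ[ℂ] H := e₁.symm.trans e₂ with hU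
    have hUnorm : ∀ y : H, ‖U y‖ = ‖y‖ := by
      intro y
      have hx : e₁ (e₁.symm y) = y := e₁.apply_symm_apply y
      set x := e₁.symm y
      have h1 : ‖e₂ x‖ ^ 2 = ‖T x‖ ^ 2 + ‖(x : H)‖ ^ 2 :=
        cayley_norm_sq T hsymm (-Complex.I) (by simp) (by simp) x
      have h2 : ‖e₁ x‖ ^ 2 = ‖T x‖ ^ 2 + ‖(x : H)‖ ^ 2 :=
        cayley_norm_sq T hsymm Complex.I Complex.I_re Complex.norm_I x
      have h3 : ‖e₂ x‖ ^ 2 = ‖y‖ ^ 2 := by rw [h1, ← h2, hx]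
      have : ‖U y‖ = ‖e₂ x‖ := rfl
      rw [this, ← Real.sqrt_sq (norm_nonneg (e₂ x)), h3, Real.sqrt_sq (norm_nonneg y)]
    refine ⟨⟨U, hUnorm⟩, ?_, ?_⟩
    · intro x
      have h1 : (T x + Complex.I • (x : H)) = e₁ x := (cayleyAuxMap_apply T Complex.I x).symm
      show U (T x + Complex.I • (x : H)) = _
      rw [h1, hU]
      have : e₁.symm.trans e₂ (e₁ x) = e₂ (e₁.symm (e₁ x)) := rfl
      rw [this, e₁.symm_apply_apply]
      show cayleyAuxMap T (-Complex.I) x = _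
      rw [cayleyAuxMap_apply, neg_smul, sub_eq_add_neg]
    · intro y hy
      have hUy : U y = y := hy
      have h2 : e₁ (e₁.symm y) = y := e₁.apply_symm_apply y
      set x := e₁.symm y
      have h1 : e₂ x = y := hUy
      have heq : cayleyAuxMap T (-Complex.I) x = cayleyAuxMap T Complex.I x := by
        show e₂ x = e₁ x
        rw [h1, h2]
      rw [cayleyAuxMap_apply, cayleyAuxMap_apply] at heq
      have hsm : (-Complex.I) • (x : H) = Complex.I • (x : H) := by
        exact add_left_cancel heq
      have hz : (Complex.I - (-Complex.I)) • (x : H) = 0 := by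
        rw [sub_smul, hsm, sub_self]
      have hx0 : (x : H) = 0 := by
        rcases smul_eq_zero.mp hz with h | h
        · exact absurd h (by simp [Complex.ext_iff])
        · exact h
      have : x = 0 := ZeroMemClass.coe_eq_zero.mp hx0
      rw [← h2, this, map_zero]
end

section
/- Let H be a complex Hilbert space and T a densely defined closed symmetric operator on H. Let D be a subspace with dom T ⊆ D ⊆ dom T†, and let S be the restriction of T† to D (so T ⊆ S ⊆ T†). If D = { f ∈ dom T† : for all g ∈ D, ⟨T† f, g⟩ = ⟨f, T† g⟩ } (i.e. D is exactly the Ω-annihilator of itself, where Ω(f,g) = ⟨T† f, g⟩ − ⟨f, T† g⟩), then S is self-adjoint: S† = S. -/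
local notation "⟪" x ", " y "⟫" => @inner ℂ _ _ x y

/-!
Write `S` for the restriction of `T†` to `D`. Since `T ≤ S`, taking adjoints reverses the
inclusion and `S† ≤ T†`. The forward half of the Lagrangian condition says that `S` is symmetric,
so `S ≤ S†`. Conversely, a vector of `dom S†` is `Ω`-orthogonal to `dom S = D`, so the backward
half puts it in `D`, whence `S† ≤ S`.
-/

namespace LinearPMap

theorem le_domRestrict_iff {R E F : Type*} [Ring R] [AddCommGroup E] [Module R E]
    [AddCommGroup F] [Module R F] {f g : E →ₗ.[R] F} {D : Submodule R E} :
    f ≤ g.domRestrict D ↔ f ≤ g ∧ f.domain ≤ D := by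
  refine ⟨fun h => ⟨h.trans domRestrict_le, fun x hx => (h.1 hx).1⟩, fun ⟨hfg, hD⟩ => ?_⟩
  refine ⟨fun x hx => ⟨hD hx, hfg.1 hx⟩, fun x y hxy => ?_⟩
  rw [domRestrict_le.2 (x := y) (y := ⟨y, y.2.2⟩) rfl]
  exact hfg.2 hxy

variable {𝕜 E F : Type*} [RCLike 𝕜] [NormedAddCommGroup E] [InnerProductSpace 𝕜 E]
  [NormedAddCommGroup F] [InnerProductSpace 𝕜 F]

theorem isFormalAdjoint_domRestrict_self {A : E →ₗ.[𝕜] E} {D : Submodule 𝕜 E}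
    (h : ∀ x y : A.domain, (x : E) ∈ D → (y : E) ∈ D →
      inner 𝕜 (A x) y = inner 𝕜 (x : E) (A y)) :
    (A.domRestrict D).IsFormalAdjoint (A.domRestrict D) := fun x y => by
  rw [domRestrict_le.2 (x := x) (y := ⟨x, x.2.2⟩) rfl,
    domRestrict_le.2 (x := y) (y := ⟨y, y.2.2⟩) rfl]
  exact h ⟨x, x.2.2⟩ ⟨y, y.2.2⟩ x.2.1 y.2.1

variable [CompleteSpace E]

theorem adjoint_le_adjoint {T S : E →ₗ.[𝕜] F} (hT : Dense (T.domain : Set E)) (h : T ≤ S) :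
    S† ≤ T† :=
  IsFormalAdjoint.le_adjoint hT <| IsFormalAdjoint.symm fun x y => by
    rw [h.2 (y := ⟨y, h.1 y.2⟩) rfl]
    exact adjoint_isFormalAdjoint (hT.mono h.1) x ⟨y, h.1 y.2⟩

theorem inner_apply_eq_of_adjoint_le {A S : E →ₗ.[𝕜] E} (hS : Dense (S.domain : Set E))
    (hSA : S ≤ A) (hadj : S† ≤ A) (x g : A.domain) (hx : (x : E) ∈ S†.domain)
    (hg : (g : E) ∈ S.domain) : inner 𝕜 (A x) g = inner 𝕜 (x : E) (A g) := by
  rw [← hadj.2 (x := ⟨x, hx⟩) rfl, ← hSA.2 (x := ⟨g, hg⟩) rfl]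
  exact adjoint_isFormalAdjoint hS ⟨x, hx⟩ ⟨g, hg⟩

end LinearPMap

open LinearPMap

theorem selfAdjoint_of_lagrangian_boundary_condition_general
    {H : Type*} [NormedAddCommGroup H] [InnerProductSpace ℂ H] [CompleteSpace H]
    (T : H →ₗ.[ℂ] H) (hdense : Dense (T.domain : Set H))
    (hsym : T ≤ T.adjoint)
    (D : Submodule ℂ H) (hTD : T.domain ≤ D)
    (hLag : ∀ f : T.adjoint.domain,
      ((f : H) ∈ D ↔
        ∀ g : T.adjoint.domain, (g : H) ∈ D →
          ⟪T.adjoint f, (g : H)⟫ = ⟪(f : H), T.adjoint g⟫)) :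
    (T.adjoint.domRestrict D).adjoint = T.adjoint.domRestrict D := by
  set S := T.adjoint.domRestrict D
  have hTS : T ≤ S := le_domRestrict_iff.2 ⟨hsym, hTD⟩
  have hSdense : Dense (S.domain : Set H) := hdense.mono hTS.1
  have hSsym : S ≤ S.adjoint :=
    (isFormalAdjoint_domRestrict_self fun x y hx hy => (hLag x).1 hx y hy).le_adjoint hSdense
  have hadj : S.adjoint ≤ T.adjoint := adjoint_le_adjoint hdense hTS
  refine le_antisymm (le_domRestrict_iff.2 ⟨hadj, fun x hx => ?_⟩) hSsym
  exact (hLag ⟨x, hadj.1 hx⟩).2 fun g hg =>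
    inner_apply_eq_of_adjoint_le hSdense domRestrict_le hadj _ g hx ⟨hg, g.2⟩

/-- **Lagrangian boundary conditions yield self-adjoint extensions.**
Let `T` be a densely defined closed symmetric operator on a complex Hilbert space `H`,
and let `D` be a subspace with `dom T ⊆ D ⊆ dom T†`.  If `D` coincides with its own
annihilator with respect to the symplectic form `Ω(f,g) = ⟪T† f, g⟫ - ⟪f, T† g⟫`, i.e.
for every `f ∈ dom T†` one has `f ∈ D ↔ ∀ g ∈ D, ⟪T† f, g⟫ = ⟪f, T† g⟫`,
then the restriction `S` of `T†` to `D` is self-adjoint: `S† = S`. -/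
theorem selfAdjoint_of_lagrangian_boundary_condition
    {H : Type*} [NormedAddCommGroup H] [InnerProductSpace ℂ H] [CompleteSpace H]
    (T : H →ₗ.[ℂ] H) (hdense : Dense (T.domain : Set H))
    (hclosed : T.IsClosed) (hsym : T ≤ T.adjoint)
    (D : Submodule ℂ H) (hTD : T.domain ≤ D) (hDT : D ≤ T.adjoint.domain)
    (hLag : ∀ f : T.adjoint.domain,
      ((f : H) ∈ D ↔
        ∀ g : T.adjoint.domain, (g : H) ∈ D →
          ⟪T.adjoint f, (g : H)⟫ = ⟪(f : H), T.adjoint g⟫)) :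
    (T.adjoint.domRestrict D).adjoint = T.adjoint.domRestrict D :=
  selfAdjoint_of_lagrangian_boundary_condition_general T hdense hsym D hTD hLag
end
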